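/- Every direct sum of pure-injective R-modules is pure-injective if and only if the class of pure-injective R-modules is closed under directed colimits along pure embeddings; that is, if and only if for every directed system of pure-injective R-modules whose transition maps are pure embeddings, the direct limit of the system is pure-injective. -/

import Mathlib

universe u

/-- `A` is a pure submodule of its ambient module: every finite system of
`R`-linear equations `∑ j, r i j • x j = a i` with constants `a i ∈ A` that has
a solution in the ambient module has a solution in `A`. -/
def IsPureSubmodule {R : Type*} [Ring R] {M : Type*} [AddCommGroup M] [Module R M]
    (A : Submodule R M) : Prop :=
  ∀ (m n : ℕ) (r : Fin m → Fin n → R) (a : Fin m → M),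
    (∀ i, a i ∈ A) →
    (∃ x : Fin n → M, ∀ i, (∑ j, r i j • x j) = a i) →
    ∃ x : Fin n → M, (∀ j, x j ∈ A) ∧ ∀ i, (∑ j, r i j • x j) = a i

/-- A pure embedding is an injective linear map whose image is a pure submodule
of its codomain. -/
def IsPureEmbedding {R : Type*} [Ring R] {M N : Type*} [AddCommGroup M] [Module R M]
    [AddCommGroup N] [Module R N] (f : M →ₗ[R] N) : Prop :=
  Function.Injective f ∧ IsPureSubmodule (LinearMap.range f)

/-- `E` is pure-injective: every homomorphism `g : A → E` extends along every
pure embedding `f : A → B`. -/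
def PureInjective (R : Type u) [Ring R] (E : Type u) [AddCommGroup E] [Module R E] : Prop :=
  ∀ (A B : Type u) [AddCommGroup A] [Module R A] [AddCommGroup B] [Module R B]
    (f : A →ₗ[R] B), IsPureEmbedding f →
    ∀ g : A →ₗ[R] E, ∃ h : B →ₗ[R] E, h.comp f = g

/-!
Both properties are equivalent to: a module which is the directed union of pure, pure-injective
submodules is pure-injective. Indeed, a direct limit along pure embeddings is the directed union
of the images of its terms, and a direct sum is the directed union of its finite partial sums,
which are direct summands isomorphic to finite products.

Assuming direct sums of pure-injective modules are pure-injective, the union of a directed set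
`S` of such submodules is treated by induction on `#S`. For a well-ordered chain `V`, each
`⨆ k < j, V k` is pure in `V j` and pure-injective, hence a direct summand of `V j`, and the
union of the chain is the direct sum of the complements. An uncountable `S` is the union of a
chain of directed subsets of smaller cardinality, and a countable one has a cofinal sequence.
-/

section Purity

variable {R : Type*} [Ring R] {M N P L : Type*} [AddCommGroup M] [Module R M]
  [AddCommGroup N] [Module R N] [AddCommGroup P] [Module R P] [AddCommGroup L] [Module R L]

theorem isPureEmbedding_iff (f : M →ₗ[R] N) :
    IsPureEmbedding f ↔ Function.Injective f ∧
      ∀ (m n : ℕ) (r : Fin m → Fin n → R) (b : Fin m → M),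
        (∃ y : Fin n → N, ∀ i, ∑ j, r i j • y j = f (b i)) →
        ∃ x : Fin n → M, ∀ i, ∑ j, r i j • x j = b i := by
  refine and_congr_right fun hf =>
    ⟨fun hpure m n r b hsol => ?_, fun hrefl m n r a ha hsol => ?_⟩
  · obtain ⟨y, hy, hyb⟩ := hpure m n r (f ∘ b) (fun i => ⟨b i, rfl⟩) hsol
    choose x hx using hy
    refine ⟨x, fun i => hf ?_⟩
    simpa only [map_sum, map_smul, hx, Function.comp_apply] using hyb i
  · choose b hb using ha
    obtain ⟨y, hy⟩ := hsol
    obtain ⟨x, hx⟩ := hrefl m n r b ⟨y, fun i => (hy i).trans (hb i).symm⟩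
    refine ⟨f ∘ x, fun j => ⟨x j, rfl⟩, fun i => ?_⟩
    simp only [Function.comp_apply, ← map_smul, ← map_sum, hx, hb]

theorem isPureEmbedding_id : IsPureEmbedding (LinearMap.id : M →ₗ[R] M) :=
  (isPureEmbedding_iff _).2 ⟨Function.injective_id, fun _ _ _ _ h => h⟩

theorem IsPureEmbedding.of_comp {f : M →ₗ[R] N} {g : N →ₗ[R] P}
    (h : IsPureEmbedding (g ∘ₗ f)) : IsPureEmbedding f := by
  rw [isPureEmbedding_iff] at h ⊢
  refine ⟨fun a b hab => h.1 (by simp [hab]),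
    fun m n r b ⟨y, hy⟩ => h.2 m n r b ⟨g ∘ y, fun i => ?_⟩⟩
  simp only [Function.comp_apply, LinearMap.comp_apply, ← hy i, map_sum, map_smul]

theorem isPureEmbedding_of_leftInverse {f : M →ₗ[R] N} {g : N →ₗ[R] M}
    (h : g ∘ₗ f = LinearMap.id) : IsPureEmbedding f :=
  (h.symm ▸ isPureEmbedding_id : IsPureEmbedding (g ∘ₗ f)).of_comp

theorem isPureSubmodule_iff_isPureEmbedding_subtype (A : Submodule R L) :
    IsPureSubmodule A ↔ IsPureEmbedding A.subtype := by
  simp [IsPureEmbedding, Subtype.val_injective]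

theorem IsPureSubmodule.isPureEmbedding_inclusion {A B : Submodule R L} (hA : IsPureSubmodule A)
    (hAB : A ≤ B) : IsPureEmbedding (Submodule.inclusion hAB) :=
  IsPureEmbedding.of_comp (g := B.subtype) <| by
    rw [Submodule.subtype_comp_inclusion]
    exact (isPureSubmodule_iff_isPureEmbedding_subtype A).1 hA

theorem isPureSubmodule_bot : IsPureSubmodule (⊥ : Submodule R L) := by
  intro m n r a ha _
  refine ⟨0, fun _ => Submodule.zero_mem _, fun i => ?_⟩
  simp [(Submodule.mem_bot R).1 (ha i)]

theorem isPureSubmodule_iSup_of_directed {κ : Type*} {A : κ → Submodule R L}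
    (hdir : Directed (· ≤ ·) A) (hA : ∀ k, IsPureSubmodule (A k)) :
    IsPureSubmodule (⨆ k, A k) := by
  classical
  cases isEmpty_or_nonempty κ
  · rw [iSup_of_empty]; exact isPureSubmodule_bot
  intro m n r a ha hsol
  choose k hk using fun i => (Submodule.mem_iSup_of_directed A hdir).1 (ha i)
  obtain ⟨k₀, hk₀⟩ := hdir.finset_le (Finset.univ.image k)
  have hak₀ : ∀ i, a i ∈ A k₀ := fun i =>
    hk₀ (k i) (Finset.mem_image_of_mem k (Finset.mem_univ i)) (hk i)
  obtain ⟨x, hx, hxa⟩ := hA k₀ m n r a hak₀ hsol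
  exact ⟨x, fun j => Submodule.mem_iSup_of_mem k₀ (hx j), hxa⟩

theorem isPureSubmodule_sSup_of_directedOn {S : Set (Submodule R L)}
    (hdir : DirectedOn (· ≤ ·) S) (hS : ∀ A ∈ S, IsPureSubmodule A) :
    IsPureSubmodule (sSup S) := by
  rw [sSup_eq_iSup']
  exact isPureSubmodule_iSup_of_directed hdir.directed_val fun A => hS A A.2

end Purity

section PureInjective

variable {R : Type u} [Ring R] {E F L : Type u} [AddCommGroup E] [Module R E]
  [AddCommGroup F] [Module R F] [AddCommGroup L] [Module R L]

theorem PureInjective.of_retract (hE : PureInjective R E) (s : F →ₗ[R] E) (p : E →ₗ[R] F)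
    (hps : p ∘ₗ s = LinearMap.id) : PureInjective R F := fun A B _ _ _ _ f hf g =>
  let ⟨h, hh⟩ := hE A B f hf (s ∘ₗ g)
  ⟨p ∘ₗ h, by
    rw [LinearMap.comp_assoc, hh, ← LinearMap.comp_assoc, hps, LinearMap.id_comp]⟩

theorem PureInjective.of_linearEquiv (hE : PureInjective R E) (e : E ≃ₗ[R] F) :
    PureInjective R F :=
  hE.of_retract e.symm.toLinearMap e.toLinearMap (by ext; simp)

theorem PureInjective.of_isCompl (hE : PureInjective R E) {p q : Submodule R E}
    (h : IsCompl p q) : PureInjective R p :=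
  hE.of_retract p.subtype (p.projectionOnto q h) (by ext; simp)

theorem pureInjective_of_subsingleton [Subsingleton E] : PureInjective R E :=
  fun _ _ _ _ _ _ _ _ _ => ⟨0, by ext; exact Subsingleton.elim _ _⟩

theorem PureInjective.pi {ι : Type u} {M : ι → Type u} [∀ i, AddCommGroup (M i)]
    [∀ i, Module R (M i)] (hM : ∀ i, PureInjective R (M i)) : PureInjective R (∀ i, M i) := by
  intro A B _ _ _ _ f hf g
  choose h hh using fun i => hM i A B f hf (LinearMap.proj i ∘ₗ g)
  exact ⟨LinearMap.pi h, by ext a i; exact LinearMap.congr_fun (hh i) a⟩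

theorem exists_pureInjective_complement {W V : Submodule R L} (hWV : W ≤ V)
    (hW : IsPureSubmodule W) (hWPI : PureInjective R W) (hVPI : PureInjective R V) :
    ∃ C : Submodule R L, Disjoint W C ∧ W ⊔ C = V ∧ PureInjective R C := by
  obtain ⟨r, hr⟩ := hWPI W V _ (hW.isPureEmbedding_inclusion hWV) LinearMap.id
  let π : V →ₗ[R] LinearMap.range (Submodule.inclusion hWV) :=
    (LinearEquiv.ofInjective _ (Submodule.inclusion_injective hWV)).toLinearMap ∘ₗ r
  have hcompl : IsCompl (LinearMap.range (Submodule.inclusion hWV)) (LinearMap.ker π) :=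
    LinearMap.isCompl_of_proj fun ⟨_, w, hw⟩ => by
      subst hw
      ext
      simp [π, show r (Submodule.inclusion hWV w) = w from LinearMap.congr_fun hr w]
  have hcompl' := Set.Iic.isCompl_iff.1 (V.mapIic.isCompl hcompl)
  simp only [Submodule.coe_mapIic_apply, Submodule.map_subtype_range_inclusion] at hcompl'
  exact ⟨_, hcompl'.1, hcompl'.2, (hVPI.of_isCompl hcompl.symm).of_linearEquiv
    (Submodule.equivMapOfInjective _ V.injective_subtype _)⟩

end PureInjective

section Lattice

variable {α : Type*} [CompleteLattice α] {J : Type*} [LinearOrder J]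

theorem iSupIndep_of_disjoint_iSup_lt [IsModularLattice α] [IsCompactlyGenerated α] {C : J → α}
    (h : ∀ j, Disjoint (C j) (⨆ k < j, C k)) : iSupIndep C := by
  classical
  refine iSupIndep_iff_supIndep.2 fun s => ?_
  induction s using Finset.induction_on_max with
  | empty => exact Finset.supIndep_empty C
  | insert a s has ih =>
    exact ih.insert <| (h a).mono_right <|
      Finset.sup_le fun k hk => le_iSup₂_of_le k (has k hk) le_rfl

theorem iSup_lt_eq_iSup_lt_of_sup_eq [WellFoundedLT J] {V C : J → α} {j : J}
    (h : ∀ k < j, (⨆ l < k, V l) ⊔ C k = V k) : ⨆ k < j, V k = ⨆ k < j, C k := by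
  refine le_antisymm (iSup₂_le fun k hk => ?_) (iSup₂_mono fun k hk => ?_)
  · induction k using WellFoundedLT.induction with
    | _ k ih =>
      rw [← h k hk]
      exact sup_le (iSup₂_le fun l hl => ih l hl (hl.trans hk)) (le_iSup₂_of_le k hk le_rfl)
  · rw [← h k hk]
    exact le_sup_right

end Lattice

def PureInjectiveClosedUnderDirectSums (R : Type u) [Ring R] : Prop :=
  ∀ (ι : Type u) (M : ι → Type u) [∀ i, AddCommGroup (M i)] [∀ i, Module R (M i)],
    (∀ i, PureInjective R (M i)) → PureInjective R (DirectSum ι M)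

namespace PureInjectiveClosedUnderDirectSums

variable {R : Type u} [Ring R] {L : Type u} [AddCommGroup L] [Module R L]

theorem pureInjective_iSup (hDS : PureInjectiveClosedUnderDirectSums R) {κ : Type u}
    {P : κ → Submodule R L} (hind : iSupIndep P)
    (hP : ∀ k, PureInjective R (P k)) : PureInjective R ↥(⨆ k, P k) := by
  classical
  have hinj : Function.Injective (DirectSum.coeLinearMap P) := hind.dfinsupp_lsum_injective
  exact (hDS κ _ hP).of_linearEquiv
    ((LinearEquiv.ofInjective _ hinj).trans (LinearEquiv.ofEq _ _ DirectSum.range_coeLinearMap))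

theorem pureInjective_iSup_of_monotone (hDS : PureInjectiveClosedUnderDirectSums R)
    {J : Type u} [LinearOrder J] [WellFoundedLT J]
    {V : J → Submodule R L} (hV : Monotone V) (hpure : ∀ j, IsPureSubmodule (V j))
    (hPI : ∀ j, PureInjective R (V j)) : PureInjective R ↥(⨆ j, V j) := by
  classical
  let IsComplementAt (j : J) (C : Submodule R L) : Prop :=
    Disjoint (⨆ k < j, V k) C ∧ (⨆ k < j, V k) ⊔ C = V j ∧ PureInjective R C
  -- `C j` is a chosen complement of `⨆ k < j, V k` in `V j`. One always exists, as that
  -- supremum is pure and, being `⨆ k < j, C k` with independent summands, pure-injective.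
  let C : J → Submodule R L := fun j => if h : ∃ C, IsComplementAt j C then h.choose else ⊥
  have hC : ∀ j, IsComplementAt j (C j) := by
    intro j
    induction j using WellFoundedLT.induction with
    | _ j ih =>
      have hCV : ∀ k < j, C k ≤ V k := fun k hk => le_sup_right.trans (ih k hk).2.1.le
      have hind : iSupIndep fun k : {k // k < j} => C k :=
        iSupIndep_of_disjoint_iSup_lt fun k => (ih k k.2).1.symm.mono_right <|
          iSup₂_le fun l hl => (hCV l l.2).trans (le_iSup₂_of_le l.1 hl le_rfl)
      have hW : ⨆ k < j, V k = ⨆ k : {k // k < j}, C k :=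
        (iSup_lt_eq_iSup_lt_of_sup_eq fun k hk => (ih k hk).2.1).trans iSup_subtype'
      have hex : ∃ C, IsComplementAt j C := by
        refine exists_pureInjective_complement (iSup₂_le fun k hk => hV hk.le) ?_ ?_ (hPI j)
        · rw [iSup_subtype']
          exact isPureSubmodule_iSup_of_directed
            (hV.comp (Subtype.mono_coe _)).directed_le fun k => hpure k
        · rw [hW]
          exact hDS.pureInjective_iSup hind fun k => (ih k k.2).2.2
      simpa only [C, dif_pos hex] using hex.choose_spec
  have hCV : ∀ j, C j ≤ V j := fun j => le_sup_right.trans (hC j).2.1.le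
  have hind : iSupIndep C :=
    iSupIndep_of_disjoint_iSup_lt fun j => (hC j).1.symm.mono_right (iSup₂_mono fun k _ => hCV k)
  have hsup : ⨆ j, C j = ⨆ j, V j := by
    refine le_antisymm (iSup_mono hCV) (iSup_le fun j => ?_)
    rw [← (hC j).2.1, iSup_lt_eq_iSup_lt_of_sup_eq fun k _ => (hC k).2.1]
    exact sup_le (iSup₂_le fun k _ => le_iSup C k) (le_iSup C j)
  rw [← hsup]
  exact hDS.pureInjective_iSup hind fun j => (hC j).2.2

end PureInjectiveClosedUnderDirectSums

section BinaryClosure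

open Cardinal

variable {α : Type u} (op : α → α → α)

def binaryClosureIter (A : Set α) : ℕ → Set α
  | 0 => A
  | n + 1 => binaryClosureIter A n ∪ Set.image2 op (binaryClosureIter A n) (binaryClosureIter A n)

def binaryClosure (A : Set α) : Set α :=
  ⋃ n, binaryClosureIter op A n

theorem subset_binaryClosure (A : Set α) : A ⊆ binaryClosure op A :=
  Set.subset_iUnion (binaryClosureIter op A) 0

theorem binaryClosure_mono {A B : Set α} (h : A ⊆ B) :
    binaryClosure op A ⊆ binaryClosure op B := by
  refine Set.iUnion_mono fun n => ?_
  induction n with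
  | zero => exact h
  | succ n ih => exact Set.union_subset_union ih (Set.image2_subset ih ih)

theorem op_mem_binaryClosure {A : Set α} {x y : α} (hx : x ∈ binaryClosure op A)
    (hy : y ∈ binaryClosure op A) : op x y ∈ binaryClosure op A := by
  have hmono : Monotone (binaryClosureIter op A) :=
    monotone_nat_of_le_succ fun n => Set.subset_union_left
  obtain ⟨m, hm⟩ := Set.mem_iUnion.1 hx
  obtain ⟨n, hn⟩ := Set.mem_iUnion.1 hy
  exact Set.mem_iUnion.2 ⟨max m n + 1, Or.inr <|
    Set.mem_image2_of_mem (hmono (le_max_left m n) hm) (hmono (le_max_right m n) hn)⟩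

theorem mk_binaryClosure_le (A : Set α) : #(binaryClosure op A) ≤ max #A ℵ₀ := by
  have hiter : ∀ n, #(binaryClosureIter op A n) ≤ max #A ℵ₀ := by
    intro n
    induction n with
    | zero => exact le_max_left _ _
    | succ n ih =>
      calc #(binaryClosureIter op A (n + 1))
          ≤ #(binaryClosureIter op A n) +
              #(binaryClosureIter op A n) * #(binaryClosureIter op A n) :=
            (mk_union_le _ _).trans (add_le_add le_rfl mk_image2_le)
        _ ≤ max #A ℵ₀ + max #A ℵ₀ * max #A ℵ₀ := by gcongr
        _ = max #A ℵ₀ := by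
          rw [mul_eq_self (le_max_right _ _), add_eq_self (le_max_right _ _)]
  have := mk_iUnion_le_lift (binaryClosureIter op A)
  simp only [lift_uzero, mk_nat, lift_aleph0] at this
  refine this.trans ((mul_le_mul' le_rfl (ciSup_le' hiter)).trans ?_)
  rw [mul_eq_max le_rfl (le_max_right _ _), max_eq_right (le_max_right _ _)]

end BinaryClosure

section DirectedOn

open Cardinal

/-- `T j` is the closure, under a choice of upper bounds, of an initial segment of a
well-order of `S` of least type. -/
theorem DirectedOn.exists_iUnion_eq_of_aleph0_lt {β : Type u} [Preorder β] {S : Set β}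
    (hdir : DirectedOn (· ≤ ·) S) (hS : ℵ₀ < #S) :
    ∃ (J : Type u) (_ : LinearOrder J) (_ : WellFoundedLT J) (T : J → Set β),
      Monotone T ∧ (∀ j, T j ⊆ S) ∧ (∀ j, DirectedOn (· ≤ ·) (T j)) ∧
        (∀ j, #(T j) < #S) ∧ ⋃ j, T j = S := by
  have := hdir.isDirectedOrder
  obtain ⟨e⟩ : Nonempty ((#S).ord.ToType ≃ S) := Cardinal.eq.1 (mk_ord_toType _)
  choose u hu₁ hu₂ using fun x y : S => exists_ge_ge x y
  refine ⟨_, inferInstance, inferInstance,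
    fun j => Subtype.val '' binaryClosure u (e '' Set.Iic j), fun j k hjk => ?_,
    fun j => Subtype.coe_image_subset _ _, fun j => ?_, fun j => ?_, ?_⟩
  · exact Set.image_mono <| binaryClosure_mono u <| Set.image_mono (Set.Iic_subset_Iic.2 hjk)
  · exact directedOn_image.2
      fun x hx y hy => ⟨u x y, op_mem_binaryClosure u hx hy, hu₁ x y, hu₂ x y⟩
  · have hIio : #(Set.Iio j) < #S := by
      have := mk_Iio_lt j (by rw [mk_ord_toType, Ordinal.type_toType])
      rwa [mk_ord_toType] at this
    have hIic : #(Set.Iic j) < #S := by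
      rw [← Set.Iio_insert]
      exact mk_insert_le.trans_lt (add_lt_of_lt hS.le hIio (one_lt_aleph0.trans hS))
    exact mk_image_le.trans_lt <| (mk_binaryClosure_le u _).trans_lt <|
      max_lt (mk_image_le.trans_lt hIic) hS
  · refine subset_antisymm (Set.iUnion_subset fun j => Subtype.coe_image_subset _ _)
      fun x hx => Set.mem_iUnion.2 ⟨e.symm ⟨x, hx⟩, ⟨x, hx⟩, ?_, rfl⟩
    exact subset_binaryClosure u _ ⟨e.symm ⟨x, hx⟩, Set.self_mem_Iic, e.apply_symm_apply _⟩

end DirectedOn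

namespace PureInjectiveClosedUnderDirectSums

open Cardinal

variable {R : Type u} [Ring R] {L : Type u} [AddCommGroup L] [Module R L]

theorem pureInjective_sSup_of_countable (hDS : PureInjectiveClosedUnderDirectSums R)
    {S : Set (Submodule R L)} (hdir : DirectedOn (· ≤ ·) S) (hne : S.Nonempty)
    (hcount : S.Countable) (hpure : ∀ A ∈ S, IsPureSubmodule A)
    (hPI : ∀ A ∈ S, PureInjective R A) : PureInjective R ↥(sSup S) := by
  have := hdir.isDirectedOrder
  have := hne.to_subtype
  have := hcount.to_subtype
  obtain ⟨xs, hxs, htend⟩ := Filter.exists_seq_monotone_tendsto_atTop_atTop S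
  have hsup : ⨆ n : ULift.{u} ℕ, (xs n.down : Submodule R L) = sSup S := by
    refine le_antisymm (iSup_le fun n => le_sSup (xs n.down).2) (sSup_le fun A hA => ?_)
    obtain ⟨N, hN⟩ := Filter.tendsto_atTop_atTop.1 htend ⟨A, hA⟩
    exact le_iSup_of_le ⟨N⟩ (hN N le_rfl)
  rw [← hsup]
  exact hDS.pureInjective_iSup_of_monotone (fun _ _ h => hxs h)
    (fun n => hpure _ (xs n.down).2) (fun n => hPI _ (xs n.down).2)

theorem pureInjective_sSup_of_directedOn (hDS : PureInjectiveClosedUnderDirectSums R)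
    {S : Set (Submodule R L)} (hdir : DirectedOn (· ≤ ·) S)
    (hpure : ∀ A ∈ S, IsPureSubmodule A) (hPI : ∀ A ∈ S, PureInjective R A) :
    PureInjective R ↥(sSup S) := by
  obtain ⟨c, hc⟩ : ∃ c, #S = c := ⟨_, rfl⟩
  induction c using WellFoundedLT.induction generalizing S with
  | _ c ih =>
    rcases S.eq_empty_or_nonempty with rfl | hne
    · rw [sSup_empty]
      exact pureInjective_of_subsingleton
    by_cases hcount : S.Countable
    · exact hDS.pureInjective_sSup_of_countable hdir hne hcount hpure hPI
    have hS : ℵ₀ < #S :=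
      lt_of_not_ge fun h => hcount (Set.countable_coe_iff.1 (mk_le_aleph0_iff.1 h))
    obtain ⟨J, _, _, T, hT, hTS, hTdir, hTcard, hTU⟩ :=
      hdir.exists_iUnion_eq_of_aleph0_lt hS
    have hsup : ⨆ j, sSup (T j) = sSup S := by rw [← hTU, sSup_iUnion]
    rw [← hsup]
    exact hDS.pureInjective_iSup_of_monotone (fun j k h => sSup_le_sSup (hT h))
      (fun j => isPureSubmodule_sSup_of_directedOn (hTdir j) fun A hA => hpure A (hTS j hA))
      (fun j => ih _ (hc ▸ hTcard j) (hTdir j) (fun A hA => hpure A (hTS j hA))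
        (fun A hA => hPI A (hTS j hA)) rfl)

end PureInjectiveClosedUnderDirectSums

namespace Module.DirectLimit

variable {R : Type*} [Ring R] {ι : Type*} [Preorder ι] [IsDirected ι (· ≤ ·)]
  [DecidableEq ι] {G : ι → Type*} [∀ i, AddCommGroup (G i)] [∀ i, Module R (G i)]
  {f : ∀ i j, i ≤ j → G i →ₗ[R] G j}

theorem of_injective_of_injective [DirectedSystem G fun i j h => f i j h]
    (hf : ∀ i j h, Function.Injective (f i j h)) (i : ι) :
    Function.Injective (of R ι G f i) := fun _ _ hxy =>
  let ⟨j, hij, h⟩ := exists_eq_of_of_eq hxy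
  hf i j hij h

theorem exists_ge_of_fin [Nonempty ι] {n : ℕ} (i : ι) (x : Fin n → DirectLimit G f) :
    ∃ k, i ≤ k ∧ ∃ y : Fin n → G k, ∀ j, of R ι G f k (y j) = x j := by
  classical
  choose k y hy using fun j => exists_of (x j)
  obtain ⟨k₀, hk₀⟩ := Finset.exists_le (insert i (Finset.univ.image k))
  exact ⟨k₀, hk₀ i (Finset.mem_insert_self _ _),
    fun j => f (k j) k₀ (hk₀ _ (by simp)) (y j), fun j => by rw [of_f, hy]⟩

/-- A system with constants in `G i` solvable in the limit is solvable in some `G k`, and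
purity of `f i k` brings the solution back to `G i`. -/
theorem isPureEmbedding_of [Nonempty ι] [DirectedSystem G fun i j h => f i j h]
    (hf : ∀ i j h, IsPureEmbedding (f i j h)) (i : ι) :
    IsPureEmbedding (of R ι G f i) := by
  have hinj := of_injective_of_injective fun i j h => (hf i j h).1
  refine (isPureEmbedding_iff _).2 ⟨hinj i, fun m n r b ⟨x, hx⟩ => ?_⟩
  obtain ⟨k, hik, y, hy⟩ := exists_ge_of_fin i x
  refine ((isPureEmbedding_iff _).1 (hf i k hik)).2 m n r b ⟨y, fun p => hinj k ?_⟩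
  simp only [map_sum, map_smul, hy, of_f, hx p]

end Module.DirectLimit

def PureInjectiveClosedUnderPureDirectLimits (R : Type u) [Ring R] : Prop :=
  ∀ (ι : Type u) [Preorder ι] [IsDirected ι (· ≤ ·)] [Nonempty ι] [DecidableEq ι]
    (G : ι → Type u) [∀ i, AddCommGroup (G i)] [∀ i, Module R (G i)]
    (f : ∀ i j, i ≤ j → G i →ₗ[R] G j) [DirectedSystem G fun i j h => f i j h],
    (∀ i, PureInjective R (G i)) →
    (∀ (i j : ι) (h : i ≤ j), IsPureEmbedding (f i j h)) →
    PureInjective R (Module.DirectLimit G f)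

theorem PureInjectiveClosedUnderDirectSums.closedUnderPureDirectLimits {R : Type u} [Ring R]
    (hDS : PureInjectiveClosedUnderDirectSums R) : PureInjectiveClosedUnderPureDirectLimits R := by
  intro ι _ _ _ _ G _ _ f _ hPI hf
  let S := Set.range fun i => LinearMap.range (Module.DirectLimit.of R ι G f i)
  have hmono : Monotone fun i => LinearMap.range (Module.DirectLimit.of R ι G f i) := by
    rintro i j h _ ⟨x, rfl⟩
    exact ⟨f i j h x, Module.DirectLimit.of_f⟩
  have htop : sSup S = ⊤ := by
    refine eq_top_iff.2 fun z _ => ?_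
    obtain ⟨i, x, rfl⟩ := Module.DirectLimit.exists_of z
    exact (le_sSup ⟨i, rfl⟩ : LinearMap.range (Module.DirectLimit.of R ι G f i) ≤ sSup S)
      (LinearMap.mem_range_self _ x)
  refine PureInjective.of_linearEquiv ?_ (LinearEquiv.ofTop _ htop)
  refine hDS.pureInjective_sSup_of_directedOn (directedOn_range.2 hmono.directed_le) ?_ ?_
  · rintro _ ⟨i, rfl⟩
    exact (Module.DirectLimit.isPureEmbedding_of hf i).2
  · rintro _ ⟨i, rfl⟩
    exact (hPI i).of_linearEquiv
      (LinearEquiv.ofInjective _ (Module.DirectLimit.isPureEmbedding_of hf i).1)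

namespace DirectSum

variable {R : Type*} [Ring R] {ι : Type*} [DecidableEq ι] {M : ι → Type*}
  [∀ i, AddCommGroup (M i)] [∀ i, Module R (M i)]

theorem mem_range_lmk_iff {s : Finset ι} {x : ⨁ i, M i} :
    x ∈ LinearMap.range (lmk R ι M s) ↔ ∀ i ∉ s, x i = 0 := by
  constructor
  · rintro ⟨y, rfl⟩ i hi
    simp [lmk, DFinsupp.lmk, DFinsupp.mk_apply, hi]
  · intro hx
    refine ⟨fun i => x i, DFinsupp.ext fun i => ?_⟩
    by_cases hi : i ∈ s <;> simp [lmk, DFinsupp.lmk, DFinsupp.mk_apply, hi, hx]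

theorem pi_component_comp_lmk (s : Finset ι) :
    (LinearMap.pi fun i : (↑s : Set ι) => component R ι M i) ∘ₗ lmk R ι M s =
      LinearMap.id :=
  LinearMap.ext fun _ => funext fun i => DFinsupp.mk_of_mem i.2

end DirectSum

namespace PureInjectiveClosedUnderPureDirectLimits

variable {R : Type u} [Ring R] {L : Type u} [AddCommGroup L] [Module R L]

theorem pureInjective_of_monotone (hDL : PureInjectiveClosedUnderPureDirectLimits R)
    {κ : Type u} [Preorder κ] [IsDirected κ (· ≤ ·)] [Nonempty κ] {P : κ → Submodule R L}
    (hP : Monotone P) (hcover : ∀ x, ∃ k, x ∈ P k) (hpure : ∀ k, IsPureSubmodule (P k))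
    (hPI : ∀ k, PureInjective R (P k)) : PureInjective R L := by
  classical
  have : DirectedSystem (fun k => ↥(P k)) fun i j h => Submodule.inclusion (hP h) :=
    ⟨fun _ _ => rfl, fun _ _ _ _ _ _ => rfl⟩
  have hlim := hDL κ (fun k => P k) (fun i j h => Submodule.inclusion (hP h)) hPI
    fun i j h => (hpure i).isPureEmbedding_inclusion (hP h)
  refine hlim.of_linearEquiv (LinearEquiv.ofBijective
    (Module.DirectLimit.lift R κ _ _ (fun k => (P k).subtype) fun _ _ _ _ => rfl)
    ⟨Module.DirectLimit.lift_injective _ _ fun k => Subtype.val_injective, fun x => ?_⟩)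
  obtain ⟨k, hk⟩ := hcover x
  exact ⟨Module.DirectLimit.of R κ _ _ k ⟨x, hk⟩, Module.DirectLimit.lift_of ..⟩

theorem closedUnderDirectSums
    (hDL : PureInjectiveClosedUnderPureDirectLimits R) : PureInjectiveClosedUnderDirectSums R := by
  classical
  intro ι M _ _ hM
  refine hDL.pureInjective_of_monotone (P := fun s => LinearMap.range (DirectSum.lmk R ι M s))
    (fun s t hst x hx => ?_) (fun x => ⟨x.support, ?_⟩) (fun s => ?_) (fun s => ?_)
  · rw [DirectSum.mem_range_lmk_iff] at hx ⊢
    exact fun i hi => hx i fun h => hi (hst h)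
  · exact DirectSum.mem_range_lmk_iff.2 fun i hi => DFinsupp.notMem_support_iff.1 hi
  · exact (isPureEmbedding_of_leftInverse (DirectSum.pi_component_comp_lmk s)).2
  · exact (PureInjective.pi (M := fun i : (↑s : Set ι) => M i) fun i => hM i).of_linearEquiv
      (LinearEquiv.ofInjective _ (DFinsupp.mk_injective s))

end PureInjectiveClosedUnderPureDirectLimits

theorem stmt19 (R : Type u) [Ring R] :
    -- every direct sum of pure-injective `R`-modules is pure-injective
    (∀ (ι : Type u) (M : ι → Type u) [∀ i, AddCommGroup (M i)] [∀ i, Module R (M i)],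
      (∀ i, PureInjective R (M i)) → PureInjective R (DirectSum ι M)) ↔
    -- iff for every directed system of pure-injective modules with pure-embedding
    -- transition maps, the direct limit is pure-injective
    (∀ (ι : Type u) [Preorder ι] [IsDirected ι (· ≤ ·)] [Nonempty ι] [DecidableEq ι]
      (G : ι → Type u) [∀ i, AddCommGroup (G i)] [∀ i, Module R (G i)]
      (f : ∀ i j, i ≤ j → G i →ₗ[R] G j) [DirectedSystem G fun i j h => f i j h],
      (∀ i, PureInjective R (G i)) →
      (∀ (i j : ι) (h : i ≤ j), IsPureEmbedding (f i j h)) →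
      PureInjective R (Module.DirectLimit G f)) :=
  ⟨PureInjectiveClosedUnderDirectSums.closedUnderPureDirectLimits,
    PureInjectiveClosedUnderPureDirectLimits.closedUnderDirectSums⟩
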